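/- arXiv:2503.24001 — 5 statements merged into one kernel-verified Lean document; each statement's English description precedes it below -/
import Mathlib

section
/- For all nonnegative real numbers a, b and every real p ≥ 1, (p+1)·(a − b)·(a^p − b^p) ≥ (4p/(p+1))·(a^{(p+1)/2} − b^{(p+1)/2})². -/
open Real

private lemma exp_sub_exp' (x y : ℝ) :
    Real.exp x - Real.exp y = 2 * Real.exp ((x + y) / 2) * Real.sinh ((x - y) / 2) := by
  rw [Real.sinh_eq]
  have : 2 * Real.exp ((x + y) / 2) * ((Real.exp ((x - y) / 2) - Real.exp (-((x - y) / 2))) / 2)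
      = Real.exp ((x + y) / 2) * Real.exp ((x - y) / 2)
        - Real.exp ((x + y) / 2) * Real.exp (-((x - y) / 2)) := by ring
  rw [this, ← Real.exp_add, ← Real.exp_add,
    show (x + y) / 2 + (x - y) / 2 = x from by ring,
    show (x + y) / 2 + -((x - y) / 2) = y from by ring]

private lemma sinh_mul_sinh' (x y : ℝ) :
    Real.sinh x * Real.sinh y = (Real.cosh (x + y) - Real.cosh (x - y)) / 2 := by
  simp only [Real.sinh_eq, Real.cosh_eq, Real.exp_add, Real.exp_sub, Real.exp_neg]
  field_simp
  ring

private lemma sinh_le_c (c : ℝ) (hc : 0 ≤ c) (hc1 : c ≤ 1) (y : ℝ) (hy : 0 ≤ y) :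
    Real.sinh (c * y) ≤ c * Real.sinh y := by
  have hmono : MonotoneOn (fun z => c * Real.sinh z - Real.sinh (c * z)) (Set.Ici 0) := by
    apply monotoneOn_of_deriv_nonneg (convex_Ici 0)
    · fun_prop
    · apply Differentiable.differentiableOn; fun_prop
    · intro x hx
      have h1 : HasDerivAt (fun z => c * Real.sinh z - Real.sinh (c * z))
          (c * Real.cosh x - Real.cosh (c * x) * (c * 1)) x :=
        ((Real.hasDerivAt_sinh x).const_mul c).sub
          ((Real.hasDerivAt_sinh (c * x)).comp x ((hasDerivAt_id x).const_mul c))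
      rw [h1.deriv]
      have hx0 : 0 ≤ x := le_of_lt (by simpa using hx)
      have hcc : Real.cosh (c * x) ≤ Real.cosh x := by
        rw [Real.cosh_le_cosh, abs_of_nonneg (mul_nonneg hc hx0), abs_of_nonneg hx0]
        nlinarith
      nlinarith
  have h := hmono Set.self_mem_Ici (Set.mem_Ici.2 hy) hy
  simp only [mul_zero, Real.sinh_zero, sub_zero] at h
  linarith

private lemma cosh_bound (c : ℝ) (hc : 0 ≤ c) (hc1 : c ≤ 1) (y : ℝ) (hy : 0 ≤ y) :
    Real.cosh (c * y) ≤ 1 + c ^ 2 * (Real.cosh y - 1) := by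
  have hmono : MonotoneOn (fun z => c ^ 2 * Real.cosh z - Real.cosh (c * z)) (Set.Ici 0) := by
    apply monotoneOn_of_deriv_nonneg (convex_Ici 0)
    · fun_prop
    · apply Differentiable.differentiableOn; fun_prop
    · intro x hx
      have h1 : HasDerivAt (fun z => c ^ 2 * Real.cosh z - Real.cosh (c * z))
          (c ^ 2 * Real.sinh x - Real.sinh (c * x) * (c * 1)) x :=
        ((Real.hasDerivAt_cosh x).const_mul (c ^ 2)).sub
          ((Real.hasDerivAt_cosh (c * x)).comp x ((hasDerivAt_id x).const_mul c))
      rw [h1.deriv]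
      have hx0 : 0 ≤ x := le_of_lt (by simpa using hx)
      have hs := sinh_le_c c hc hc1 x hx0
      nlinarith
  have h := hmono Set.self_mem_Ici (Set.mem_Ici.2 hy) hy
  simp only [mul_zero, Real.cosh_zero] at h
  nlinarith

private lemma key_sinh (p d : ℝ) (hp : 1 ≤ p) (hd : 0 ≤ d) :
    4 * p * (Real.sinh ((p + 1) / 2 * d)) ^ 2
      ≤ (p + 1) ^ 2 * (Real.sinh d * Real.sinh (p * d)) := by
  have hp1 : (0 : ℝ) < p + 1 := by linarith
  have h1 : Real.sinh d * Real.sinh (p * d)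
      = (Real.cosh ((p + 1) * d) - Real.cosh ((p - 1) * d)) / 2 := by
    rw [sinh_mul_sinh', show d + p * d = (p + 1) * d from by ring,
      show d - p * d = -((p - 1) * d) from by ring, Real.cosh_neg]
  have h2 : (Real.sinh ((p + 1) / 2 * d)) ^ 2 = (Real.cosh ((p + 1) * d) - 1) / 2 := by
    have h := sinh_mul_sinh' ((p + 1) / 2 * d) ((p + 1) / 2 * d)
    rw [show (p + 1) / 2 * d + (p + 1) / 2 * d = (p + 1) * d from by ring, sub_self,
      Real.cosh_zero] at h
    rw [sq, h]
  have hc : Real.cosh ((p - 1) * d)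
      ≤ 1 + ((p - 1) / (p + 1)) ^ 2 * (Real.cosh ((p + 1) * d) - 1) := by
    have h := cosh_bound ((p - 1) / (p + 1)) (by apply div_nonneg <;> linarith)
      (by rw [div_le_one hp1]; linarith) ((p + 1) * d) (by positivity)
    rwa [show (p - 1) / (p + 1) * ((p + 1) * d) = (p - 1) * d from by field_simp] at h
  have hc2 : (p + 1) ^ 2 * Real.cosh ((p - 1) * d)
      ≤ (p + 1) ^ 2 + (p - 1) ^ 2 * (Real.cosh ((p + 1) * d) - 1) := by
    calc (p + 1) ^ 2 * Real.cosh ((p - 1) * d)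
        ≤ (p + 1) ^ 2 * (1 + ((p - 1) / (p + 1)) ^ 2 * (Real.cosh ((p + 1) * d) - 1)) :=
          mul_le_mul_of_nonneg_left hc (sq_nonneg _)
      _ = (p + 1) ^ 2 + (p - 1) ^ 2 * (Real.cosh ((p + 1) * d) - 1) := by
          field_simp
  have hC := Real.one_le_cosh ((p + 1) * d)
  rw [h1, h2]
  nlinarith [hc2, hC]

private lemma main_exp (s t p : ℝ) (hp : 1 ≤ p) (hst : t ≤ s) :
    (p + 1) * (Real.exp s - Real.exp t) * (Real.exp (s * p) - Real.exp (t * p))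
      ≥ (4 * p / (p + 1)) * (Real.exp (s * ((p + 1) / 2)) - Real.exp (t * ((p + 1) / 2))) ^ 2 := by
  have hp1 : (0 : ℝ) < p + 1 := by linarith
  set m := (s + t) / 2 with hm
  set d := (s - t) / 2 with hdd
  have hd : 0 ≤ d := by rw [hdd]; linarith
  have e1 : Real.exp s - Real.exp t = 2 * Real.exp m * Real.sinh d := exp_sub_exp' s t
  have e2 : Real.exp (s * p) - Real.exp (t * p) = 2 * Real.exp (p * m) * Real.sinh (p * d) := by
    rw [exp_sub_exp' (s * p) (t * p),
      show (s * p + t * p) / 2 = p * m from by rw [hm]; ring,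
      show (s * p - t * p) / 2 = p * d from by rw [hdd]; ring]
  have e3 : Real.exp (s * ((p + 1) / 2)) - Real.exp (t * ((p + 1) / 2))
      = 2 * Real.exp ((p + 1) / 2 * m) * Real.sinh ((p + 1) / 2 * d) := by
    rw [exp_sub_exp' (s * ((p + 1) / 2)) (t * ((p + 1) / 2)),
      show (s * ((p + 1) / 2) + t * ((p + 1) / 2)) / 2 = (p + 1) / 2 * m from by rw [hm]; ring,
      show (s * ((p + 1) / 2) - t * ((p + 1) / 2)) / 2 = (p + 1) / 2 * d from by rw [hdd]; ring]
  rw [e1, e2, e3, ge_iff_le, div_mul_eq_mul_div, div_le_iff₀ hp1]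
  have hE : Real.exp ((p + 1) / 2 * m) * Real.exp ((p + 1) / 2 * m)
      = Real.exp m * Real.exp (p * m) := by
    rw [← Real.exp_add, ← Real.exp_add]
    congr 1
    ring
  have hkey := key_sinh p d hp hd
  have hEpos : (0 : ℝ) < Real.exp m * Real.exp (p * m) :=
    mul_pos (Real.exp_pos m) (Real.exp_pos (p * m))
  calc 4 * p * (2 * Real.exp ((p + 1) / 2 * m) * Real.sinh ((p + 1) / 2 * d)) ^ 2
      = 4 * (Real.exp ((p + 1) / 2 * m) * Real.exp ((p + 1) / 2 * m))
          * (4 * p * Real.sinh ((p + 1) / 2 * d) ^ 2) := by ring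
    _ = 4 * (Real.exp m * Real.exp (p * m)) * (4 * p * Real.sinh ((p + 1) / 2 * d) ^ 2) := by
        rw [hE]
    _ ≤ 4 * (Real.exp m * Real.exp (p * m))
          * ((p + 1) ^ 2 * (Real.sinh d * Real.sinh (p * d))) :=
        mul_le_mul_of_nonneg_left hkey (by positivity)
    _ = (p + 1) * (2 * Real.exp m * Real.sinh d) * (2 * Real.exp (p * m) * Real.sinh (p * d))
          * (p + 1) := by ring

theorem stroock_varopoulos (a b p : ℝ) (ha : 0 ≤ a) (hb : 0 ≤ b) (hp : 1 ≤ p) :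
    (p + 1) * (a - b) * (a ^ p - b ^ p)
      ≥ (4 * p / (p + 1)) * (a ^ ((p + 1) / 2) - b ^ ((p + 1) / 2)) ^ 2 := by
  have hp1 : (0 : ℝ) < p + 1 := by linarith
  wlog hab : b ≤ a with H
  · push_neg at hab
    have h := H b a p hb ha hp hp1 (le_of_lt hab)
    have e1 : (p + 1) * (b - a) * (b ^ p - a ^ p) = (p + 1) * (a - b) * (a ^ p - b ^ p) := by
      ring
    have e2 : (b ^ ((p + 1) / 2) - a ^ ((p + 1) / 2)) ^ 2
        = (a ^ ((p + 1) / 2) - b ^ ((p + 1) / 2)) ^ 2 := by ring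
    rw [e1, e2] at h
    exact h
  rcases eq_or_lt_of_le hb with hb0 | hb0
  · -- b = 0
    subst hb0
    rcases eq_or_lt_of_le ha with ha0 | ha0
    · subst ha0
      simp
    · have hpne : p ≠ 0 := by linarith
      have hqpos : (0 : ℝ) < (p + 1) / 2 := by linarith
      rw [Real.zero_rpow hpne, Real.zero_rpow (ne_of_gt hqpos)]
      have h1 : a ^ (p + 1) = a ^ p * a := by
        rw [Real.rpow_add ha0, Real.rpow_one]
      have h2 : (a ^ ((p + 1) / 2)) ^ 2 = a ^ (p + 1) := by
        rw [sq, ← Real.rpow_add ha0]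
        congr 1
        ring
      have hX : 0 < a ^ (p + 1) := Real.rpow_pos_of_pos ha0 _
      have hdiv : 4 * p / (p + 1) ≤ p + 1 := by
        rw [div_le_iff₀ hp1]
        nlinarith
      rw [ge_iff_le, sub_zero, sub_zero, sub_zero]
      calc 4 * p / (p + 1) * (a ^ ((p + 1) / 2)) ^ 2
          = 4 * p / (p + 1) * a ^ (p + 1) := by rw [h2]
        _ ≤ (p + 1) * a ^ (p + 1) := mul_le_mul_of_nonneg_right hdiv hX.le
        _ = (p + 1) * a * a ^ p := by rw [h1]; ring
  · -- 0 < b ≤ a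
    have ha0 : 0 < a := lt_of_lt_of_le hb0 hab
    have hst : Real.log b ≤ Real.log a := Real.log_le_log hb0 hab
    have h := main_exp (Real.log a) (Real.log b) p hp hst
    rw [Real.exp_log ha0, Real.exp_log hb0, ← Real.rpow_def_of_pos ha0 p,
      ← Real.rpow_def_of_pos hb0 p, ← Real.rpow_def_of_pos ha0 ((p + 1) / 2),
      ← Real.rpow_def_of_pos hb0 ((p + 1) / 2)] at h
    exact h
end

section
/- For all nonnegative real numbers a, b and every real p ≥ 1, |b^p − a^p| ≤ (2p/(p+1)) · (max a b)^{(p−1)/2} · |b^{(p+1)/2} − a^{(p+1)/2}|. -/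
lemma key_rpow_sub (A B r : ℝ) (hA : 0 ≤ A) (hAB : A ≤ B) (hr : 1 ≤ r) :
    B ^ r - A ^ r ≤ r * B ^ (r - 1) * (B - A) := by
  have hB : 0 ≤ B := hA.trans hAB
  rcases eq_or_lt_of_le hB with hB0 | hB0
  · have hA0 : A = 0 := le_antisymm (hAB.trans hB0.ge) hA
    subst hA0
    rw [← hB0]
    simp [Real.zero_rpow (by linarith : r ≠ 0)]
  · have hs : (-1 : ℝ) ≤ A / B - 1 := by
      have : 0 ≤ A / B := div_nonneg hA hB
      linarith
    have hber := one_add_mul_self_le_rpow_one_add hs hr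
    have h1 : (1 : ℝ) + (A / B - 1) = A / B := by ring
    rw [h1] at hber
    have hmul := mul_le_mul_of_nonneg_left hber (Real.rpow_pos_of_pos hB0 r).le
    have hdiv : B ^ r * (A / B) ^ r = A ^ r := by
      rw [Real.div_rpow hA hB]
      field_simp
    rw [hdiv] at hmul
    have hsub : B ^ (r - 1) = B ^ r / B := Real.rpow_sub hB0 r 1 ▸ by rw [Real.rpow_one]
    have hBne : B ≠ 0 := ne_of_gt hB0
    have : B ^ r * (1 + r * (A / B - 1)) = B ^ r - r * (B ^ r / B) * (B - A) := by
      field_simp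
      ring
    rw [this] at hmul
    rw [hsub]
    linarith

theorem power_difference_ineq (a b p : ℝ) (ha : 0 ≤ a) (hb : 0 ≤ b) (hp : 1 ≤ p) :
    |b ^ p - a ^ p|
      ≤ (2 * p / (p + 1)) * (max a b) ^ ((p - 1) / 2)
          * |b ^ ((p + 1) / 2) - a ^ ((p + 1) / 2)| := by
  -- reduce to the case a ≤ b by symmetry
  wlog hab : a ≤ b with H
  · have := H b a p hb ha hp (le_of_not_ge hab)
    rwa [abs_sub_comm, max_comm, abs_sub_comm (a ^ ((p + 1) / 2))] at this
  set q : ℝ := (p + 1) / 2 with hq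
  have hq1 : 1 ≤ q := by rw [hq]; linarith
  have hq0 : 0 < q := by linarith
  have hr1 : 1 ≤ p / q := (one_le_div hq0).2 (by rw [hq]; linarith)
  have hAq : a ^ q ≤ b ^ q := Real.rpow_le_rpow ha hab hq0.le
  have hap : a ^ p ≤ b ^ p := Real.rpow_le_rpow ha hab (by linarith)
  have key := key_rpow_sub (a ^ q) (b ^ q) (p / q) (Real.rpow_nonneg ha q) hAq hr1
  have hqr : q * (p / q) = p := by field_simp
  have haP : (a ^ q) ^ (p / q) = a ^ p := by rw [← Real.rpow_mul ha, hqr]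
  have hbP : (b ^ q) ^ (p / q) = b ^ p := by rw [← Real.rpow_mul hb, hqr]
  have hbE : (b ^ q) ^ (p / q - 1) = b ^ ((p - 1) / 2) := by
    rw [← Real.rpow_mul hb]
    congr 1
    field_simp
    ring
  rw [haP, hbP, hbE] at key
  have hrq : p / q = 2 * p / (p + 1) := by rw [hq]; field_simp
  rw [hrq] at key
  rw [max_eq_right hab, abs_of_nonneg (by linarith), abs_of_nonneg (by linarith)]
  linarith
end

section
/- Let N_x, N_y ≥ 1 and let c : ZMod N_x × ZMod N_y → ℝ be a doubly periodic grid function. Define the discrete second differences d_x² c(i,j) = (c(i+1,j) − 2c(i,j) + c(i−1,j))/Δx², d_y² c(i,j) = (c(i,j+1) − 2c(i,j) + c(i,j−1))/Δy², and the mixed difference d_x d_y c(i,j) = (c(i,j) − c(i+1,j) − c(i,j+1) + c(i+1,j+1))/(Δx·Δy), for fixed positive reals Δx, Δy. Then ∑_{i,j} d_x² c(i,j) · d_y² c(i,j) = ∑_{i,j} (d_x d_y c(i,j))². -/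
section aux

variable {Nx Ny : ℕ} [NeZero Nx] [NeZero Ny]

lemma shift_sum_aux (f : ZMod Nx × ZMod Ny → ℝ) (a : ZMod Nx) (b : ZMod Ny) :
    ∑ p : ZMod Nx × ZMod Ny, f (p.1 + a, p.2 + b) = ∑ p : ZMod Nx × ZMod Ny, f p :=
  Fintype.sum_equiv ((Equiv.addRight a).prodCongr (Equiv.addRight b)) _ _ (fun _ => rfl)

lemma key_aux (c : ZMod Nx × ZMod Ny → ℝ) (a s : ZMod Nx) (b t : ZMod Ny) :
    ∑ r : ZMod Nx × ZMod Ny, c (r.1 + a, r.2 + b) * c (r.1 + s, r.2 + t) =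
      ∑ r : ZMod Nx × ZMod Ny, c r * c (r.1 + (s - a), r.2 + (t - b)) := by
  rw [← shift_sum_aux (fun r => c r * c (r.1 + (s - a), r.2 + (t - b))) a b]
  refine Finset.sum_congr rfl fun r _ => ?_
  have h1 : r.1 + a + (s - a) = r.1 + s := by ring
  have h2 : r.2 + b + (t - b) = r.2 + t := by ring
  simp only [h1, h2]

end aux

theorem mixed_second_difference_identity (Nx Ny : ℕ) [NeZero Nx] [NeZero Ny]
    (Δx Δy : ℝ) (hΔx : 0 < Δx) (hΔy : 0 < Δy)
    (c : ZMod Nx × ZMod Ny → ℝ)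
    (dxx dyy dxy : ZMod Nx × ZMod Ny → ℝ)
    (hdxx : ∀ i j, dxx (i, j) = (c (i + 1, j) - 2 * c (i, j) + c (i - 1, j)) / Δx ^ 2)
    (hdyy : ∀ i j, dyy (i, j) = (c (i, j + 1) - 2 * c (i, j) + c (i, j - 1)) / Δy ^ 2)
    (hdxy : ∀ i j, dxy (i, j) =
      (c (i, j) - c (i + 1, j) - c (i, j + 1) + c (i + 1, j + 1)) / (Δx * Δy)) :
    ∑ p : ZMod Nx × ZMod Ny, dxx p * dyy p = ∑ p : ZMod Nx × ZMod Ny, (dxy p) ^ 2 := by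
  have hx : (Δx : ℝ) ≠ 0 := hΔx.ne'
  have hy : (Δy : ℝ) ≠ 0 := hΔy.ne'
  -- per-point rewriting of the summands, with all shifts in the normal form (p.1 + a, p.2 + b)
  have hL : ∀ p : ZMod Nx × ZMod Ny, dxx p * dyy p =
      (1 / (Δx ^ 2 * Δy ^ 2)) *
        ((c (p.1 + 1, p.2 + 0) - 2 * c (p.1 + 0, p.2 + 0) + c (p.1 + (-1), p.2 + 0)) *
         (c (p.1 + 0, p.2 + 1) - 2 * c (p.1 + 0, p.2 + 0) + c (p.1 + 0, p.2 + (-1)))) := by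
    intro p
    rw [show dxx p = _ from hdxx p.1 p.2, show dyy p = _ from hdyy p.1 p.2]
    simp only [add_zero, sub_eq_add_neg, Prod.mk.eta]
    field_simp
  have hR : ∀ p : ZMod Nx × ZMod Ny, (dxy p) ^ 2 =
      (1 / (Δx ^ 2 * Δy ^ 2)) *
        ((c (p.1 + 0, p.2 + 0) - c (p.1 + 1, p.2 + 0) - c (p.1 + 0, p.2 + 1) +
          c (p.1 + 1, p.2 + 1)) ^ 2) := by
    intro p
    rw [show dxy p = _ from hdxy p.1 p.2]
    simp only [add_zero, Prod.mk.eta]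
    rw [div_pow, mul_pow]
    ring
  simp only [hL, hR, ← Finset.mul_sum]
  congr 1
  -- expand both integrands into monomials with explicit shift normal forms
  have expandL : ∀ p : ZMod Nx × ZMod Ny,
      (c (p.1 + 1, p.2 + 0) - 2 * c (p.1 + 0, p.2 + 0) + c (p.1 + (-1), p.2 + 0)) *
        (c (p.1 + 0, p.2 + 1) - 2 * c (p.1 + 0, p.2 + 0) + c (p.1 + 0, p.2 + (-1))) =
      c (p.1 + 1, p.2 + 0) * c (p.1 + 0, p.2 + 1)
      + (-2 : ℝ) * (c (p.1 + 0, p.2 + 0) * c (p.1 + 1, p.2 + 0))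
      + c (p.1 + 0, p.2 + (-1)) * c (p.1 + 1, p.2 + 0)
      + (-2 : ℝ) * (c (p.1 + 0, p.2 + 0) * c (p.1 + 0, p.2 + 1))
      + (4 : ℝ) * (c (p.1 + 0, p.2 + 0) * c (p.1 + 0, p.2 + 0))
      + (-2 : ℝ) * (c (p.1 + 0, p.2 + (-1)) * c (p.1 + 0, p.2 + 0))
      + c (p.1 + (-1), p.2 + 0) * c (p.1 + 0, p.2 + 1)
      + (-2 : ℝ) * (c (p.1 + (-1), p.2 + 0) * c (p.1 + 0, p.2 + 0))
      + c (p.1 + 0, p.2 + (-1)) * c (p.1 + (-1), p.2 + 0) := by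
    intro p; ring
  have expandR : ∀ p : ZMod Nx × ZMod Ny,
      (c (p.1 + 0, p.2 + 0) - c (p.1 + 1, p.2 + 0) - c (p.1 + 0, p.2 + 1) +
          c (p.1 + 1, p.2 + 1)) ^ 2 =
      c (p.1 + 0, p.2 + 0) * c (p.1 + 0, p.2 + 0)
      + c (p.1 + 1, p.2 + 0) * c (p.1 + 1, p.2 + 0)
      + c (p.1 + 0, p.2 + 1) * c (p.1 + 0, p.2 + 1)
      + c (p.1 + 1, p.2 + 1) * c (p.1 + 1, p.2 + 1)
      + (-2 : ℝ) * (c (p.1 + 0, p.2 + 0) * c (p.1 + 1, p.2 + 0))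
      + (-2 : ℝ) * (c (p.1 + 0, p.2 + 0) * c (p.1 + 0, p.2 + 1))
      + (2 : ℝ) * (c (p.1 + 0, p.2 + 0) * c (p.1 + 1, p.2 + 1))
      + (2 : ℝ) * (c (p.1 + 1, p.2 + 0) * c (p.1 + 0, p.2 + 1))
      + (-2 : ℝ) * (c (p.1 + 1, p.2 + 0) * c (p.1 + 1, p.2 + 1))
      + (-2 : ℝ) * (c (p.1 + 0, p.2 + 1) * c (p.1 + 1, p.2 + 1)) := by
    intro p; ring
  simp only [expandL, expandR, Finset.sum_add_distrib, ← Finset.mul_sum]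
  rw [key_aux c 1 0 0 1, key_aux c 0 1 0 0, key_aux c 0 1 (-1) 0,
      key_aux c 0 0 0 1, key_aux c 0 0 0 0, key_aux c 0 0 (-1) 0,
      key_aux c (-1) 0 0 1, key_aux c (-1) 0 0 0, key_aux c 0 (-1) (-1) 0,
      key_aux c 1 1 0 0, key_aux c 0 0 1 1, key_aux c 1 1 1 1,
      key_aux c 0 1 0 1, key_aux c 1 1 0 1, key_aux c 0 1 1 1]
  norm_num
  ring
end

section
/- Let N_x, N_y ≥ 1, α > 0, Δx, Δy > 0, and ρ : ZMod N_x × ZMod N_y → ℝ with ρ(i,j) ≥ 0 for all (i,j). Then there exists a unique c : ZMod N_x × ZMod N_y → ℝ satisfying −d_x² c(i,j) − d_y² c(i,j) + α·c(i,j) = ρ(i,j) for all (i,j), and moreover ∑_{i,j} c(i,j) = (1/α)·∑_{i,j} ρ(i,j). -/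
theorem screened_poisson_existence_uniqueness_mass (Nx Ny : ℕ) [NeZero Nx] [NeZero Ny]
    (α Δx Δy : ℝ) (hα : 0 < α) (hΔx : 0 < Δx) (hΔy : 0 < Δy)
    (ρ : ZMod Nx × ZMod Ny → ℝ) (hρ : ∀ p, 0 ≤ ρ p) :
    (∃! c : ZMod Nx × ZMod Ny → ℝ, ∀ i j,
      -((c (i + 1, j) - 2 * c (i, j) + c (i - 1, j)) / Δx ^ 2)
        - ((c (i, j + 1) - 2 * c (i, j) + c (i, j - 1)) / Δy ^ 2)
        + α * c (i, j) = ρ (i, j)) ∧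
    (∀ c : ZMod Nx × ZMod Ny → ℝ, (∀ i j,
      -((c (i + 1, j) - 2 * c (i, j) + c (i - 1, j)) / Δx ^ 2)
        - ((c (i, j + 1) - 2 * c (i, j) + c (i, j - 1)) / Δy ^ 2)
        + α * c (i, j) = ρ (i, j)) →
      ∑ p : ZMod Nx × ZMod Ny, c p = (1 / α) * ∑ p : ZMod Nx × ZMod Ny, ρ p) := by
  have hx2 : (0:ℝ) < Δx ^ 2 := pow_pos hΔx 2
  have hy2 : (0:ℝ) < Δy ^ 2 := pow_pos hΔy 2
  set L : ((ZMod Nx × ZMod Ny) → ℝ) →ₗ[ℝ] ((ZMod Nx × ZMod Ny) → ℝ) :=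
    { toFun := fun c p =>
        -((c (p.1 + 1, p.2) - 2 * c p + c (p.1 - 1, p.2)) / Δx ^ 2)
          - ((c (p.1, p.2 + 1) - 2 * c p + c (p.1, p.2 - 1)) / Δy ^ 2)
          + α * c p
      map_add' := by intro a b; funext p; simp only [Pi.add_apply]; ring
      map_smul' := by intro r a; funext p; simp only [Pi.smul_apply, smul_eq_mul,
        RingHom.id_apply]; ring } with hL
  have hPL : ∀ c : ZMod Nx × ZMod Ny → ℝ,
      (∀ i j, -((c (i + 1, j) - 2 * c (i, j) + c (i - 1, j)) / Δx ^ 2)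
        - ((c (i, j + 1) - 2 * c (i, j) + c (i, j - 1)) / Δy ^ 2)
        + α * c (i, j) = ρ (i, j)) ↔ L c = ρ := by
    intro c
    constructor
    · intro h; funext p; exact h p.1 p.2
    · intro h i j; exact congrFun h (i, j)
  -- injectivity via discrete maximum principle
  have hinj : Function.Injective L := by
    rw [injective_iff_map_eq_zero]
    intro c hc
    have he : ∀ p : ZMod Nx × ZMod Ny,
        -((c (p.1 + 1, p.2) - 2 * c p + c (p.1 - 1, p.2)) / Δx ^ 2)
          - ((c (p.1, p.2 + 1) - 2 * c p + c (p.1, p.2 - 1)) / Δy ^ 2)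
          + α * c p = 0 := fun p => congrFun hc p
    obtain ⟨p0, hp0⟩ := Finite.exists_max c
    obtain ⟨p1, hp1⟩ := Finite.exists_min c
    have h0 : c p0 ≤ 0 := by
      have hA : (c (p0.1 + 1, p0.2) - 2 * c p0 + c (p0.1 - 1, p0.2)) / Δx ^ 2 ≤ 0 :=
        div_nonpos_iff.mpr (Or.inr ⟨by linarith [hp0 (p0.1 + 1, p0.2), hp0 (p0.1 - 1, p0.2)],
          hx2.le⟩)
      have hB : (c (p0.1, p0.2 + 1) - 2 * c p0 + c (p0.1, p0.2 - 1)) / Δy ^ 2 ≤ 0 :=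
        div_nonpos_iff.mpr (Or.inr ⟨by linarith [hp0 (p0.1, p0.2 + 1), hp0 (p0.1, p0.2 - 1)],
          hy2.le⟩)
      have h := he p0
      nlinarith
    have h1 : 0 ≤ c p1 := by
      have hA : 0 ≤ (c (p1.1 + 1, p1.2) - 2 * c p1 + c (p1.1 - 1, p1.2)) / Δx ^ 2 :=
        div_nonneg (by linarith [hp1 (p1.1 + 1, p1.2), hp1 (p1.1 - 1, p1.2)]) hx2.le
      have hB : 0 ≤ (c (p1.1, p1.2 + 1) - 2 * c p1 + c (p1.1, p1.2 - 1)) / Δy ^ 2 :=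
        div_nonneg (by linarith [hp1 (p1.1, p1.2 + 1), hp1 (p1.1, p1.2 - 1)]) hy2.le
      have h := he p1
      nlinarith
    funext p
    have := hp0 p
    have := hp1 p
    have := hp1 p0
    simp only [Pi.zero_apply]
    linarith
  have hsurj : Function.Surjective L := (LinearMap.injective_iff_surjective).mp hinj
  -- mass identity
  have hmass : ∀ c : ZMod Nx × ZMod Ny → ℝ, (∀ i j,
      -((c (i + 1, j) - 2 * c (i, j) + c (i - 1, j)) / Δx ^ 2)
        - ((c (i, j + 1) - 2 * c (i, j) + c (i, j - 1)) / Δy ^ 2)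
        + α * c (i, j) = ρ (i, j)) →
      ∑ p : ZMod Nx × ZMod Ny, c p = (1 / α) * ∑ p : ZMod Nx × ZMod Ny, ρ p := by
    intro c hc
    set S := ∑ p : ZMod Nx × ZMod Ny, c p with hS
    have hsx : ∑ p : ZMod Nx × ZMod Ny, c (p.1 + 1, p.2) = S :=
      Fintype.sum_equiv (Equiv.prodCongr (Equiv.addRight (1 : ZMod Nx)) (Equiv.refl _))
        _ _ (fun p => rfl)
    have hsx' : ∑ p : ZMod Nx × ZMod Ny, c (p.1 - 1, p.2) = S :=
      Fintype.sum_equiv (Equiv.prodCongr (Equiv.subRight (1 : ZMod Nx)) (Equiv.refl _))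
        _ _ (fun p => rfl)
    have hsy : ∑ p : ZMod Nx × ZMod Ny, c (p.1, p.2 + 1) = S :=
      Fintype.sum_equiv (Equiv.prodCongr (Equiv.refl _) (Equiv.addRight (1 : ZMod Ny)))
        _ _ (fun p => rfl)
    have hsy' : ∑ p : ZMod Nx × ZMod Ny, c (p.1, p.2 - 1) = S :=
      Fintype.sum_equiv (Equiv.prodCongr (Equiv.refl _) (Equiv.subRight (1 : ZMod Ny)))
        _ _ (fun p => rfl)
    have hsum : ∑ p : ZMod Nx × ZMod Ny,
        (-((c (p.1 + 1, p.2) - 2 * c p + c (p.1 - 1, p.2)) / Δx ^ 2)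
          - ((c (p.1, p.2 + 1) - 2 * c p + c (p.1, p.2 - 1)) / Δy ^ 2)
          + α * c p) = ∑ p : ZMod Nx × ZMod Ny, ρ p :=
      Finset.sum_congr rfl (fun p _ => hc p.1 p.2)
    have hexp : ∑ p : ZMod Nx × ZMod Ny,
        (-((c (p.1 + 1, p.2) - 2 * c p + c (p.1 - 1, p.2)) / Δx ^ 2)
          - ((c (p.1, p.2 + 1) - 2 * c p + c (p.1, p.2 - 1)) / Δy ^ 2)
          + α * c p)
        = -(((∑ p : ZMod Nx × ZMod Ny, c (p.1 + 1, p.2)) - 2 * S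
            + ∑ p : ZMod Nx × ZMod Ny, c (p.1 - 1, p.2)) / Δx ^ 2)
          - (((∑ p : ZMod Nx × ZMod Ny, c (p.1, p.2 + 1)) - 2 * S
            + ∑ p : ZMod Nx × ZMod Ny, c (p.1, p.2 - 1)) / Δy ^ 2) + α * S := by
      simp only [div_eq_mul_inv, ← Finset.sum_mul, Finset.sum_add_distrib,
        Finset.sum_sub_distrib, Finset.sum_neg_distrib, ← Finset.mul_sum, hS]
    rw [hsx, hsx', hsy, hsy'] at hexp
    rw [hexp] at hsum
    have h0 : S - 2 * S + S = 0 := by ring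
    rw [h0, zero_div, zero_div] at hsum
    have hfin : α * S = ∑ p : ZMod Nx × ZMod Ny, ρ p := by linarith
    rw [← hfin]
    field_simp
  refine ⟨?_, hmass⟩
  obtain ⟨c, hcL⟩ := hsurj ρ
  refine ⟨c, (hPL c).mpr hcL, fun c' hc' => hinj ?_⟩
  rw [hcL, (hPL c').mp hc']
end

section
/- Let N_x, N_y ≥ 1, α > 0, Δx, Δy > 0, and suppose c, ρ : ZMod N_x × ZMod N_y → ℝ satisfy −d_x² c − d_y² c + α c = ρ pointwise on the periodic grid. Then ∑_{i,j} [ (d_x c(i+1/2,j))² + (d_y c(i,j+1/2))² ]·ΔxΔy + (α/2)·∑_{i,j} c(i,j)²·ΔxΔy ≤ (1/(2α))·∑_{i,j} ρ(i,j)²·ΔxΔy, where d_x c(i+1/2,j) = (c(i+1,j) − c(i,j))/Δx and d_y c(i,j+1/2) = (c(i,j+1) − c(i,j))/Δy. -/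
theorem discrete_H1_elliptic_estimate (Nx Ny : ℕ) [NeZero Nx] [NeZero Ny]
    (α Δx Δy : ℝ) (hα : 0 < α) (hΔx : 0 < Δx) (hΔy : 0 < Δy)
    (c ρ : ZMod Nx × ZMod Ny → ℝ)
    (h : ∀ i j, -((c (i + 1, j) - 2 * c (i, j) + c (i - 1, j)) / Δx ^ 2)
        - ((c (i, j + 1) - 2 * c (i, j) + c (i, j - 1)) / Δy ^ 2)
        + α * c (i, j) = ρ (i, j)) :
    ∑ p : ZMod Nx × ZMod Ny,
        (((c (p.1 + 1, p.2) - c p) / Δx) ^ 2 + ((c (p.1, p.2 + 1) - c p) / Δy) ^ 2)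
        * (Δx * Δy)
      + (α / 2) * ∑ p : ZMod Nx × ZMod Ny, (c p) ^ 2 * (Δx * Δy)
      ≤ (1 / (2 * α)) * ∑ p : ZMod Nx × ZMod Ny, (ρ p) ^ 2 * (Δx * Δy) := by
  have shift : ∀ (f : ZMod Nx × ZMod Ny → ℝ) (a : ZMod Nx × ZMod Ny),
      ∑ p, f (p + a) = ∑ p, f p := fun f a =>
    Fintype.sum_equiv (Equiv.addRight a) _ f (fun p => rfl)
  have key : ∀ (e : ZMod Nx × ZMod Ny),
      ∑ p, c p * (c (p + e) - 2 * c p + c (p - e))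
        = -∑ p, (c (p + e) - c p) ^ 2 := by
    intro e
    have h1 : ∑ p, c (p - e) * c p = ∑ p, c p * c (p + e) := by
      have := shift (fun p => c (p - e) * c p) e
      simpa using this.symm
    have h2 : ∑ p, c (p + e) ^ 2 = ∑ p, (c p) ^ 2 := shift (fun p => (c p) ^ 2) e
    have expand : ∀ p : ZMod Nx × ZMod Ny,
        c p * (c (p + e) - 2 * c p + c (p - e)) + (c (p + e) - c p) ^ 2
        = (c (p + e) ^ 2 - c p ^ 2) + (c (p - e) * c p - c p * c (p + e)) := by
      intro p; ring
    have hsum : ∑ p, (c p * (c (p + e) - 2 * c p + c (p - e)) + (c (p + e) - c p) ^ 2)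
        = 0 := by
      rw [Finset.sum_congr rfl (fun p _ => expand p), Finset.sum_add_distrib,
        Finset.sum_sub_distrib, Finset.sum_sub_distrib, h1, h2]
      ring
    rw [Finset.sum_add_distrib] at hsum
    linarith
  have hpt : ∀ p : ZMod Nx × ZMod Ny,
      ρ p = -((c (p + (1, 0)) - 2 * c p + c (p - (1, 0))) / Δx ^ 2)
        - ((c (p + (0, 1)) - 2 * c p + c (p - (0, 1))) / Δy ^ 2) + α * c p := by
    intro p
    have e1 : (p.1 + 1, p.2) = p + ((1 : ZMod Nx), (0 : ZMod Ny)) := by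
      cases p; simp [Prod.ext_iff]
    have e2 : (p.1 - 1, p.2) = p - ((1 : ZMod Nx), (0 : ZMod Ny)) := by
      cases p; simp [Prod.ext_iff]
    have e3 : (p.1, p.2 + 1) = p + ((0 : ZMod Nx), (1 : ZMod Ny)) := by
      cases p; simp [Prod.ext_iff]
    have e4 : (p.1, p.2 - 1) = p - ((0 : ZMod Nx), (1 : ZMod Ny)) := by
      cases p; simp [Prod.ext_iff]
    have := h p.1 p.2
    rw [e1, e2, e3, e4] at this
    simpa using this.symm
  set Gx : ℝ := ∑ p, (c (p + ((1 : ZMod Nx), (0 : ZMod Ny))) - c p) ^ 2 with hGx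
  set Gy : ℝ := ∑ p, (c (p + ((0 : ZMod Nx), (1 : ZMod Ny))) - c p) ^ 2 with hGy
  have cross : ∑ p, ρ p * c p
      = (1 / Δx ^ 2) * Gx + (1 / Δy ^ 2) * Gy + α * ∑ p, (c p) ^ 2 := by
    have : ∑ p, ρ p * c p
        = -(1 / Δx ^ 2) * ∑ p, c p * (c (p + ((1 : ZMod Nx), (0 : ZMod Ny))) - 2 * c p
            + c (p - ((1 : ZMod Nx), (0 : ZMod Ny))))
          - (1 / Δy ^ 2) * ∑ p, c p * (c (p + ((0 : ZMod Nx), (1 : ZMod Ny))) - 2 * c p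
            + c (p - ((0 : ZMod Nx), (1 : ZMod Ny))))
          + α * ∑ p, (c p) ^ 2 := by
      rw [Finset.mul_sum, Finset.mul_sum, Finset.mul_sum, ← Finset.sum_sub_distrib,
        ← Finset.sum_add_distrib]
      refine Finset.sum_congr rfl fun p _ => ?_
      rw [hpt p]
      field_simp
    rw [this, key ((1 : ZMod Nx), (0 : ZMod Ny)), key ((0 : ZMod Nx), (1 : ZMod Ny))]
    rw [← hGx, ← hGy]
    ring
  have young : ∑ p, ρ p * c p
      ≤ (1 / (2 * α)) * ∑ p, (ρ p) ^ 2 + (α / 2) * ∑ p, (c p) ^ 2 := by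
    rw [Finset.mul_sum, Finset.mul_sum, ← Finset.sum_add_distrib]
    refine Finset.sum_le_sum fun p _ => ?_
    have h0 : 0 ≤ (ρ p - α * c p) ^ 2 := sq_nonneg _
    have : (1 / (2 * α)) * ρ p ^ 2 + α / 2 * c p ^ 2 - ρ p * c p
        = (1 / (2 * α)) * (ρ p - α * c p) ^ 2 := by
      field_simp
      ring
    nlinarith [mul_nonneg (le_of_lt (by positivity : (0:ℝ) < 1 / (2 * α))) h0]
  have hGxnn : 0 ≤ Gx := Finset.sum_nonneg fun p _ => sq_nonneg _
  have hGynn : 0 ≤ Gy := Finset.sum_nonneg fun p _ => sq_nonneg _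
  have main : (1 / Δx ^ 2) * Gx + (1 / Δy ^ 2) * Gy + (α / 2) * ∑ p, (c p) ^ 2
      ≤ (1 / (2 * α)) * ∑ p, (ρ p) ^ 2 := by linarith [cross ▸ young]
  -- rewrite the goal
  have lhs1 : ∑ p : ZMod Nx × ZMod Ny,
      (((c (p.1 + 1, p.2) - c p) / Δx) ^ 2 + ((c (p.1, p.2 + 1) - c p) / Δy) ^ 2)
        * (Δx * Δy)
      = ((1 / Δx ^ 2) * Gx + (1 / Δy ^ 2) * Gy) * (Δx * Δy) := by
    rw [hGx, hGy, Finset.mul_sum, Finset.mul_sum, ← Finset.sum_add_distrib,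
      Finset.sum_mul]
    refine Finset.sum_congr rfl fun p _ => ?_
    have e1 : (p.1 + 1, p.2) = p + ((1 : ZMod Nx), (0 : ZMod Ny)) := by
      cases p; simp [Prod.ext_iff]
    have e3 : (p.1, p.2 + 1) = p + ((0 : ZMod Nx), (1 : ZMod Ny)) := by
      cases p; simp [Prod.ext_iff]
    rw [e1, e3]
    field_simp
  rw [lhs1, ← Finset.sum_mul, ← Finset.sum_mul]
  have hxy : 0 < Δx * Δy := mul_pos hΔx hΔy
  calc ((1 / Δx ^ 2) * Gx + (1 / Δy ^ 2) * Gy) * (Δx * Δy)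
        + α / 2 * ((∑ p, (c p) ^ 2) * (Δx * Δy))
      = ((1 / Δx ^ 2) * Gx + (1 / Δy ^ 2) * Gy + (α / 2) * ∑ p, (c p) ^ 2) * (Δx * Δy) := by
        ring
    _ ≤ ((1 / (2 * α)) * ∑ p, (ρ p) ^ 2) * (Δx * Δy) :=
        mul_le_mul_of_nonneg_right main hxy.le
    _ = 1 / (2 * α) * ((∑ p, (ρ p) ^ 2) * (Δx * Δy)) := by ring
end
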